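/- Let α ∈ R and σ₁, …, σ_n ∈ V⁰ with α + σ_r ∈ R for each r and α + τ ∈ R, where τ = σ₁ + ⋯ + σ_n. Set ẑ = t̂_α^{−τ} ∏_{r=1}^n t̂_α^{σ_r} (product in increasing order of r). Then ẑ² = ∏_{1 ≤ r < s ≤ n} [t̂_α^{σ_r}, t̂_α^{σ_s}]. -/

import Mathlib

/-- The reflection `s_α(u) = u - (u, α^∨) α` associated to a vector `α`, where
`α^∨ = 2α/(α,α)` and `B` is the bilinear form. -/
noncomputable def reflMap {V : Type*} [AddCommGroup V] [Module ℝ V] (B : V →ₗ[ℝ] V →ₗ[ℝ] ℝ)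
    (α : V) : V → V :=
  fun u => u - ((2 * B u α) / B α α) • α

/-- The defining relations of the presented group `Ŵ`: (I) `ŵ_α² = 1` and
(II) `ŵ_α ŵ_β ŵ_α = ŵ_{s_α(β)}` for `α, β ∈ R`. -/
def eawRels {V : Type*} [AddCommGroup V] [Module ℝ V] (B : V →ₗ[ℝ] V →ₗ[ℝ] ℝ)
    (R : Set V) : Set (FreeGroup R) :=
  {r | ∃ α : R, r = FreeGroup.of α * FreeGroup.of α} ∪
  {r | ∃ α β γ : R, (γ : V) = reflMap B (α : V) (β : V) ∧
        r = FreeGroup.of α * FreeGroup.of β * FreeGroup.of α * (FreeGroup.of γ)⁻¹}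

/-- The group `Ŵ` presented by generators `ŵ_α` (`α ∈ R`) and relations (I), (II). -/
abbrev EAW {V : Type*} [AddCommGroup V] [Module ℝ V] (B : V →ₗ[ℝ] V →ₗ[ℝ] ℝ)
    (R : Set V) :=
  PresentedGroup (eawRels B R)

/-- The generator `ŵ_α` of `Ŵ`. -/
def wgen {V : Type*} [AddCommGroup V] [Module ℝ V] (B : V →ₗ[ℝ] V →ₗ[ℝ] ℝ)
    (R : Set V) (α : V) (hα : α ∈ R) : EAW B R :=
  PresentedGroup.of (⟨α, hα⟩ : R)

/-- The element `t̂_α^σ = ŵ_{α+σ} ŵ_α` of `Ŵ`. -/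
def tgen {V : Type*} [AddCommGroup V] [Module ℝ V] (B : V →ₗ[ℝ] V →ₗ[ℝ] ℝ)
    (R : Set V) (α σ : V) (hα : α ∈ R) (hασ : α + σ ∈ R) : EAW B R :=
  wgen B R (α + σ) hασ * wgen B R α hα

/-! The generators `ŵ_{α+σ}`, `σ` radical, satisfy the relations of reflections of an affine
line: the reflection in `α + x` sends `α + y` to `-(α + (2x - y))`, and `ŵ_{-β} = ŵ_β`. Hence
`t̂^x = ŵ_{α+x} ŵ_α` conjugates `ŵ_{α+m}` to `ŵ_{α+m+2x}`, so a commutator of two `t̂`'s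
conjugates every `ŵ_{α+m}` trivially and commutes with all `t̂`'s. From
`t̂^a t̂^b t̂^a = t̂^{2a+b}` one gets `Q t̂^{-τ} Q' = t̂^τ` for `Q = ∏ t̂^{σ_r}` and `Q'` its
reversal, whence `ẑ² = Q'⁻¹ Q = (∏ (t̂^{σ_r})⁻¹)(∏ t̂^{σ_r})`; in a group whose commutators
commute with the factors, the latter equals the ordered product of the commutators. -/

theorem List.prod_map_mul_of_commute {G ι : Type*} [Monoid G] {f g : ι → G} :
    ∀ {l : List ι}, (∀ i ∈ l, ∀ j ∈ l, Commute (f i) (g j)) →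
      (l.map fun i => f i * g i).prod = (l.map f).prod * (l.map g).prod
  | [], _ => by simp
  | a :: l, h => by
    have hl : (l.map fun i => f i * g i).prod = (l.map f).prod * (l.map g).prod :=
      prod_map_mul_of_commute fun i hi j hj =>
        h i (List.mem_cons_of_mem a hi) j (List.mem_cons_of_mem a hj)
    have hcomm : Commute (g a) (l.map f).prod :=
      Commute.list_prod_right _ _ fun x hx => by
        obtain ⟨i, hi, rfl⟩ := List.mem_map.1 hx
        exact (h i (List.mem_cons_of_mem a hi) a List.mem_cons_self).symm
    simp only [List.map_cons, List.prod_cons, hl, mul_assoc, hcomm.left_comm]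

theorem prod_ofFn_inv_mul_prod_ofFn {G : Type*} [Group G] {n : ℕ} (X : Fin n → G)
    (hX : ∀ r s k, Commute ((X r)⁻¹ * (X s)⁻¹ * X r * X s) (X k)) :
    (List.ofFn fun r => (X r)⁻¹).prod * (List.ofFn X).prod =
      ((List.finRange n).flatMap fun r => (List.finRange n).map fun s =>
        if r < s then (X r)⁻¹ * (X s)⁻¹ * X r * X s else 1).prod := by
  induction n with
  | zero => simp
  | succ n ih =>
    have hrest := ih (fun i => X i.succ) fun r s k => hX r.succ s.succ k.succ
    have hconj : (X 0)⁻¹ * (List.ofFn fun i => (X i.succ)⁻¹).prod * X 0 =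
        ((List.finRange n).map fun s => (X 0)⁻¹ * (X s.succ)⁻¹ * X 0 * X s.succ).prod *
          (List.ofFn fun i => (X i.succ)⁻¹).prod := by
      rw [List.ofFn_eq_map, ← List.prod_map_mul_of_commute
        fun i _ j _ => (hX 0 i.succ j.succ).inv_right]
      have := map_list_prod (MulAut.conj (X 0)⁻¹) ((List.finRange n).map fun i => (X i.succ)⁻¹)
      simp only [MulAut.conj_apply, inv_inv, List.map_map, Function.comp_def] at this
      simpa [mul_assoc] using this
    simp only [List.flatMap_def, List.prod_flatten] at hrest ⊢
    simp only [List.map_map, Function.comp_def, List.ofFn_succ, List.prod_cons,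
      List.finRange_succ, List.map_cons, not_lt_zero, ↓reduceIte, Fin.succ_pos,
      Fin.succ_lt_succ_iff, one_mul] at hrest ⊢
    rw [← hrest, ← mul_assoc, hconj, mul_assoc]

/-- `u m` models `ŵ_{α+m}` for `m` in a set `S` of radical vectors. -/
structure IsAffineReflectionFamily {M G : Type*} [AddCommGroup M] [Group G]
    (S : Set M) (u : M → G) : Prop where
  zero_mem : (0 : M) ∈ S
  add_sub_mem {x y : M} : x ∈ S → y ∈ S → x + x - y ∈ S
  mul_self {x : M} : x ∈ S → u x * u x = 1
  mul_mul_self {x y : M} : x ∈ S → y ∈ S → u x * u y * u x = u (x + x - y)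

def translation {M G : Type*} [Zero M] [Mul G] (u : M → G) (x : M) : G := u x * u 0

namespace IsAffineReflectionFamily

variable {M G : Type*} [AddCommGroup M] [Group G] {S : Set M} {u : M → G}
  (h : IsAffineReflectionFamily S u)
include h

theorem neg_mem {x : M} (hx : x ∈ S) : -x ∈ S := by
  simpa using h.add_sub_mem h.zero_mem hx

theorem add_add_mem {x y : M} (hx : x ∈ S) (hy : y ∈ S) : x + x + y ∈ S := by
  simpa using h.add_sub_mem hx (h.neg_mem hy)

theorem sum_add_sum_add_mem {l : List M} (hl : ∀ z ∈ l, z ∈ S) {y : M} (hy : y ∈ S) :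
    l.sum + l.sum + y ∈ S := by
  induction l with
  | nil => simpa using hy
  | cons a l ih =>
    have := h.add_add_mem (hl a List.mem_cons_self)
      (ih fun z hz => hl z (List.mem_cons_of_mem a hz))
    convert this using 1
    simp only [List.sum_cons]
    abel

theorem inv_eq_self {x : M} (hx : x ∈ S) : (u x)⁻¹ = u x :=
  inv_eq_of_mul_eq_one_right (h.mul_self hx)

theorem translation_inv {x : M} (hx : x ∈ S) : (translation u x)⁻¹ = translation u (-x) := by
  have hconj := h.mul_mul_self h.zero_mem hx
  rw [zero_add, zero_sub] at hconj
  rw [translation, translation, mul_inv_rev, h.inv_eq_self hx, h.inv_eq_self h.zero_mem, ← hconj,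
    mul_assoc, h.mul_self h.zero_mem, mul_one]

theorem translation_mul_mul_self {x y : M} (hx : x ∈ S) (hy : y ∈ S) :
    translation u x * translation u y * translation u x = translation u (x + x + y) := by
  have hy' := h.mul_mul_self h.zero_mem hy
  have hxy := h.mul_mul_self hx (h.neg_mem hy)
  rw [zero_add, zero_sub] at hy'
  rw [sub_neg_eq_add] at hxy
  simp only [translation]
  rw [← hxy, ← hy']
  group

theorem translation_conj {x m : M} (hx : x ∈ S) (hm : m ∈ S) :
    translation u x * u m * (translation u x)⁻¹ = u (x + x + m) := by
  have hm' := h.mul_mul_self h.zero_mem hm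
  have hxm := h.mul_mul_self hx (h.neg_mem hm)
  rw [zero_add, zero_sub] at hm'
  rw [sub_neg_eq_add] at hxm
  rw [translation, mul_inv_rev, h.inv_eq_self hx, h.inv_eq_self h.zero_mem, ← hxm, ← hm']
  group

theorem translation_inv_conj {x m : M} (hx : x ∈ S) (hm : m ∈ S) :
    (translation u x)⁻¹ * u m * translation u x = u (-x + -x + m) := by
  have := h.translation_conj (h.neg_mem hx) hm
  rwa [h.translation_inv (h.neg_mem hx), neg_neg, ← h.translation_inv hx] at this

theorem commute_commutator {a b m : M} (ha : a ∈ S) (hb : b ∈ S) (hm : m ∈ S) :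
    Commute ((translation u a)⁻¹ * (translation u b)⁻¹ * translation u a * translation u b)
      (u m) := by
  set A := translation u a
  set B := translation u b
  have hbm := h.add_add_mem hb hm
  have habm := h.add_add_mem ha hbm
  have hbabm := h.add_add_mem (h.neg_mem hb) habm
  refine mul_inv_eq_iff_eq_mul.1 ?_
  calc A⁻¹ * B⁻¹ * A * B * u m * (A⁻¹ * B⁻¹ * A * B)⁻¹
      = A⁻¹ * (B⁻¹ * (A * (B * u m * B⁻¹) * A⁻¹) * B) * A := by group
    _ = u m := by
      rw [h.translation_conj hb hm, h.translation_conj ha hbm, h.translation_inv_conj hb habm,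
        h.translation_inv_conj ha hbabm]
      congr 1
      abel

theorem commute_commutator_translation {a b x : M} (ha : a ∈ S) (hb : b ∈ S) (hx : x ∈ S) :
    Commute ((translation u a)⁻¹ * (translation u b)⁻¹ * translation u a * translation u b)
      (translation u x) :=
  (h.commute_commutator ha hb hx).mul_right (h.commute_commutator ha hb h.zero_mem)

theorem prod_mul_translation_mul_prod_reverse {l : List M} (hl : ∀ z ∈ l, z ∈ S) {y : M}
    (hy : y ∈ S) :
    (l.map (translation u)).prod * translation u y * (l.map (translation u)).reverse.prod =
      translation u (l.sum + l.sum + y) := by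
  induction l with
  | nil => simp
  | cons a l ih =>
    have hl' : ∀ z ∈ l, z ∈ S := fun z hz => hl z (List.mem_cons_of_mem a hz)
    have ha := hl a List.mem_cons_self
    calc ((a :: l).map (translation u)).prod * translation u y *
          ((a :: l).map (translation u)).reverse.prod
        = translation u a * ((l.map (translation u)).prod * translation u y *
            (l.map (translation u)).reverse.prod) * translation u a := by
          simp only [List.map_cons, List.prod_cons, List.reverse_cons, List.prod_append,
            List.prod_nil, mul_one, mul_assoc]
      _ = translation u ((a :: l).sum + (a :: l).sum + y) := by
          rw [ih hl', h.translation_mul_mul_self ha (h.sum_add_sum_add_mem hl' hy),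
            List.sum_cons]
          congr 1
          abel

theorem translation_neg_sum_mul_prod_sq {n : ℕ} {σ : Fin n → M} (hσ : ∀ r, σ r ∈ S)
    (hτ : ∑ r, σ r ∈ S) :
    (translation u (-∑ r, σ r) * (List.ofFn fun r => translation u (σ r)).prod) ^ 2 =
      (List.ofFn fun r => (translation u (σ r))⁻¹).prod *
        (List.ofFn fun r => translation u (σ r)).prod := by
  have hl : ∀ z ∈ List.ofFn σ, z ∈ S := by simpa [List.mem_ofFn] using hσ
  have hofn : (List.ofFn fun r => translation u (σ r)) = (List.ofFn σ).map (translation u) := by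
    rw [List.map_ofFn]; rfl
  have hinv : ((List.ofFn σ).map (translation u)).reverse.prod⁻¹ =
      (List.ofFn fun r => (translation u (σ r))⁻¹).prod := by
    rw [List.prod_inv_reverse, List.map_reverse, List.reverse_reverse, List.map_map,
      List.map_ofFn]
    rfl
  rw [← List.sum_ofFn] at hτ ⊢
  rw [hofn, ← hinv]
  set τ := (List.ofFn σ).sum
  set P := ((List.ofFn σ).map (translation u)).prod
  set P' := ((List.ofFn σ).map (translation u)).reverse.prod
  have hpal : P * translation u (-τ) * P' = translation u τ := by
    rw [h.prod_mul_translation_mul_prod_reverse hl (h.neg_mem hτ), add_neg_cancel_right]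
  calc (translation u (-τ) * P) ^ 2
      = translation u (-τ) * (P * translation u (-τ) * P') * P'⁻¹ * P := by rw [sq]; group
    _ = P'⁻¹ * P := by rw [hpal, ← h.translation_inv hτ, inv_mul_cancel, one_mul]

end IsAffineReflectionFamily

section Reflections

variable {V : Type*} [AddCommGroup V] [Module ℝ V] (B : V →ₗ[ℝ] V →ₗ[ℝ] ℝ) (R : Set V)

theorem wgen_mul_self {β : V} (hβ : β ∈ R) : wgen B R β hβ * wgen B R β hβ = 1 :=
  PresentedGroup.one_of_mem (Or.inl ⟨⟨β, hβ⟩, rfl⟩)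

theorem wgen_mul_mul_self {β γ : V} (hβ : β ∈ R) (hγ : γ ∈ R) (hδ : reflMap B β γ ∈ R) :
    wgen B R β hβ * wgen B R γ hγ * wgen B R β hβ = wgen B R (reflMap B β γ) hδ :=
  PresentedGroup.mk_eq_mk_of_mul_inv_mem (Or.inr ⟨⟨β, hβ⟩, ⟨γ, hγ⟩, ⟨_, hδ⟩, rfl, rfl⟩)

theorem wgen_eq_of_eq {β γ : V} (e : β = γ) (hβ : β ∈ R) (hγ : γ ∈ R) :
    wgen B R β hβ = wgen B R γ hγ := by
  subst e
  rfl

variable {B}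

theorem reflMap_self {β : V} (hβ : B β β ≠ 0) : reflMap B β β = -β := by
  rw [reflMap, mul_div_assoc, div_self hβ, mul_one, two_smul]
  abel

theorem reflMap_add_add_of_radical (hsym : ∀ u v : V, B u v = B v u) {α σ ρ : V}
    (hα : B α α ≠ 0) (hσ : ∀ v, B σ v = 0) (hρ : ∀ v, B ρ v = 0) :
    reflMap B (α + σ) (α + ρ) = -(α + (σ + σ - ρ)) := by
  have hσα : B α σ = 0 := by rw [hsym, hσ]
  have hρσ : B (α + ρ) (α + σ) = B α α := by simp [hρ, hσα]
  have hσσ : B (α + σ) (α + σ) = B α α := by simp [hσ, hσα]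
  rw [reflMap, hρσ, hσσ, mul_div_assoc, div_self hα, mul_one, two_smul]
  abel

variable {R}

theorem neg_mem_of_reflMap_mem (hnon : ∀ α ∈ R, B α α ≠ 0)
    (hclos : ∀ α ∈ R, ∀ β ∈ R, reflMap B α β ∈ R) {β : V} (hβ : β ∈ R) : -β ∈ R := by
  simpa [reflMap_self (hnon β hβ)] using hclos β hβ β hβ

theorem wgen_neg (hnon : ∀ α ∈ R, B α α ≠ 0) (hclos : ∀ α ∈ R, ∀ β ∈ R, reflMap B α β ∈ R)
    {β : V} (hβ : β ∈ R) (hnβ : -β ∈ R) : wgen B R (-β) hnβ = wgen B R β hβ := by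
  have h := wgen_mul_mul_self B R hβ hβ (hclos β hβ β hβ)
  rw [wgen_mul_self, one_mul, wgen_eq_of_eq B R (reflMap_self (hnon β hβ)) _ hnβ] at h
  exact h.symm

end Reflections

section NullShifts

variable {V : Type*} [AddCommGroup V] [Module ℝ V] (B : V →ₗ[ℝ] V →ₗ[ℝ] ℝ) (R : Set V) (α : V)

def nullShifts : Set V := {σ | α + σ ∈ R ∧ ∀ v, B σ v = 0}

open Classical in
noncomputable def wgenShift (σ : V) : EAW B R :=
  if h : α + σ ∈ R then wgen B R (α + σ) h else 1

variable {B R α}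

theorem tgen_eq_translation (hα : α ∈ R) {σ : V} (hσ : α + σ ∈ R) :
    tgen B R α σ hα hσ = translation (wgenShift B R α) σ := by
  simp [tgen, translation, wgenShift, hσ, hα]

theorem isAffineReflectionFamily_wgenShift (hsym : ∀ u v : V, B u v = B v u)
    (hnon : ∀ α ∈ R, B α α ≠ 0) (hclos : ∀ α ∈ R, ∀ β ∈ R, reflMap B α β ∈ R) (hα : α ∈ R) :
    IsAffineReflectionFamily (nullShifts B R α) (wgenShift B R α) := by
  have refl_eq {x y : V} (hx : x ∈ nullShifts B R α) (hy : y ∈ nullShifts B R α) :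
      reflMap B (α + x) (α + y) = -(α + (x + x - y)) :=
    reflMap_add_add_of_radical hsym (hnon α hα) hx.2 hy.2
  have mem {x y : V} (hx : x ∈ nullShifts B R α) (hy : y ∈ nullShifts B R α) :
      α + (x + x - y) ∈ R := by
    simpa [refl_eq hx hy] using neg_mem_of_reflMap_mem hnon hclos (hclos _ hx.1 _ hy.1)
  refine ⟨⟨by simpa using hα, by simp⟩, fun hx hy => ⟨mem hx hy, fun v => ?_⟩,
    fun hx => ?_, fun hx hy => ?_⟩
  · simp [hx.2, hy.2]
  · simp only [wgenShift, dif_pos hx.1, wgen_mul_self]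
  · simp only [wgenShift, dif_pos hx.1, dif_pos hy.1, dif_pos (mem hx hy)]
    rw [wgen_mul_mul_self B R hx.1 hy.1 (hclos _ hx.1 _ hy.1),
      wgen_eq_of_eq B R (refl_eq hx hy) _ (neg_mem_of_reflMap_mem hnon hclos (mem hx hy)),
      wgen_neg hnon hclos (mem hx hy)]

end NullShifts

theorem zhat_sq_general {V : Type*} [AddCommGroup V] [Module ℝ V]
    (B : V →ₗ[ℝ] V →ₗ[ℝ] ℝ) (R : Set V)
    (hsym : ∀ u v : V, B u v = B v u)
    (hnon : ∀ α ∈ R, B α α ≠ 0)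
    (hclos : ∀ α ∈ R, ∀ β ∈ R, reflMap B α β ∈ R)
    (α : V) (hα : α ∈ R) (n : ℕ) (σs : Fin n → V)
    (hσ : ∀ r : Fin n, ∀ u : V, B (σs r) u = 0)
    (hmem : ∀ r : Fin n, α + σs r ∈ R)
    (hsum : α + ∑ r : Fin n, σs r ∈ R) :
    ∃ hns : α + -(∑ r : Fin n, σs r) ∈ R,
      (tgen B R α (-(∑ r : Fin n, σs r)) hα hns *
          (List.ofFn fun r : Fin n => tgen B R α (σs r) hα (hmem r)).prod) ^ 2 =
        ((List.finRange n).flatMap fun r =>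
          (List.finRange n).map fun s =>
            if r < s then
              (tgen B R α (σs r) hα (hmem r))⁻¹ * (tgen B R α (σs s) hα (hmem s))⁻¹ *
                tgen B R α (σs r) hα (hmem r) * tgen B R α (σs s) hα (hmem s)
            else 1).prod := by
  have hS := isAffineReflectionFamily_wgenShift hsym hnon hclos hα
  have hσS (r : Fin n) : σs r ∈ nullShifts B R α := ⟨hmem r, hσ r⟩
  have hτS : ∑ r, σs r ∈ nullShifts B R α := ⟨hsum, fun v => by simp [hσ]⟩
  refine ⟨(hS.neg_mem hτS).1, ?_⟩
  simp only [tgen_eq_translation hα]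
  rw [hS.translation_neg_sum_mul_prod_sq hσS hτS]
  exact prod_ofFn_inv_mul_prod_ofFn _ fun r s k =>
    hS.commute_commutator_translation (hσS r) (hσS s) (hσS k)

/-- Let `α ∈ R` and `σ₁, …, σ_n` in the radical with `α + σ_r ∈ R` for each `r` and
`α + τ ∈ R`, where `τ = σ₁ + ⋯ + σ_n`.  Set `ẑ = t̂_α^{−τ} ∏ t̂_α^{σ_r}`.  Then
`ẑ² = ∏_{r < s} [t̂_α^{σ_r}, t̂_α^{σ_s}]`, with `[x,y] = x⁻¹y⁻¹xy` (the commutators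
being central, the order of the product over pairs `r < s` is immaterial; here it is
taken lexicographically). -/
theorem zhat_sq {V : Type*} [AddCommGroup V] [Module ℝ V]
    (B : V →ₗ[ℝ] V →ₗ[ℝ] ℝ) (R : Set V)
    (hsym : ∀ u v : V, B u v = B v u)
    (hpsd : ∀ v : V, 0 ≤ B v v)
    (hnon : ∀ α ∈ R, B α α ≠ 0)
    (hclos : ∀ α ∈ R, ∀ β ∈ R, reflMap B α β ∈ R)
    (α : V) (hα : α ∈ R) (n : ℕ) (σs : Fin n → V)
    (hσ : ∀ r : Fin n, ∀ u : V, B (σs r) u = 0)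
    (hmem : ∀ r : Fin n, α + σs r ∈ R)
    (hsum : α + ∑ r : Fin n, σs r ∈ R) :
    ∃ hns : α + -(∑ r : Fin n, σs r) ∈ R,
      (tgen B R α (-(∑ r : Fin n, σs r)) hα hns *
          (List.ofFn fun r : Fin n => tgen B R α (σs r) hα (hmem r)).prod) ^ 2 =
        ((List.finRange n).flatMap fun r =>
          (List.finRange n).map fun s =>
            if r < s then
              (tgen B R α (σs r) hα (hmem r))⁻¹ * (tgen B R α (σs s) hα (hmem s))⁻¹ *
                tgen B R α (σs r) hα (hmem r) * tgen B R α (σs s) hα (hmem s)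
            else 1).prod :=
  zhat_sq_general B R hsym hnon hclos α hα n σs hσ hmem hsum
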